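/- Let H be a finite simple graph such that 1 is a simple eigenvalue of its adjacency matrix A_H, there is an eigenvector v for eigenvalue 1 all of whose entries are nonzero, and −1 is not an eigenvalue of A_H. Then the Cartesian product K_2 □ H is a nut graph; in particular the vector y = (v, −v) spans the kernel of the adjacency matrix of K_2 □ H. -/

import Mathlib

/-!
A kernel vector of `K₂ □ H` is a pair `(a, b)` of vectors on the two copies of `H` with
`A a + b = 0` and `A b + a = 0`. Adding these gives `A (a + b) = -(a + b)`, so `b = -a` because
`-1` is not an eigenvalue of `A`, and then `A a = a`. Hence the kernel is the image of the
`1`-eigenspace `ℝ v` of `A` under `a ↦ (a, -a)`, i.e. the line spanned by `(v, -v)`, a vector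
without zero entries.
-/

open SimpleGraph

noncomputable instance {α β : Type} (G : SimpleGraph α) (H : SimpleGraph β) :
    DecidableRel (G □ H).Adj := Classical.decRel _

open Matrix

theorem Matrix.mem_ker_mulVecLin_sub_one_iff {R V : Type*} [CommRing R] [Fintype V]
    [DecidableEq V] (A : Matrix V V R) (x : V → R) :
    x ∈ LinearMap.ker (A - 1).mulVecLin ↔ A *ᵥ x = x := by
  simp [sub_eq_zero]

theorem apply_ne_zero_of_mem_span_singleton {K ι : Type*} [Semiring K] [NoZeroDivisors K]
    {y z : ι → K} (hy : ∀ i, y i ≠ 0) (hz : z ∈ Submodule.span K {y}) (hz0 : z ≠ 0) (i : ι) :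
    z i ≠ 0 := by
  obtain ⟨c, rfl⟩ := Submodule.mem_span_singleton.mp hz
  have hc : c ≠ 0 := by rintro rfl; exact hz0 (zero_smul K y)
  exact mul_ne_zero hc (hy i)

namespace SimpleGraph

variable {R : Type*} {W V : Type}

theorem boxProd_adjMatrix_mulVec_apply [NonAssocSemiring R] [Fintype W] [Fintype V]
    (G : SimpleGraph W) (H : SimpleGraph V) [DecidableRel G.Adj] [DecidableRel H.Adj]
    (z : W × V → R) (i : W) (u : V) :
    ((G □ H).adjMatrix R *ᵥ z) (i, u) =
      (G.adjMatrix R *ᵥ fun j => z (j, u)) i + (H.adjMatrix R *ᵥ fun w => z (i, w)) u := by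
  classical
  have hsplit : ∀ j w,
      (if G.Adj i j ∧ u = w ∨ H.Adj u w ∧ i = j then (1 : R) else 0) * z (j, w) =
        (if u = w then (if G.Adj i j then z (j, w) else 0) else 0) +
          (if i = j then (if H.Adj u w then z (j, w) else 0) else 0) := by
    intro j w
    by_cases hj : i = j <;> by_cases hw : u = w <;> simp [hj, hw]
  simp only [mulVec, dotProduct, Fintype.sum_prod_type, adjMatrix_apply, boxProd_adj, hsplit,
    Finset.sum_add_distrib, Finset.sum_ite_eq, Finset.mem_univ, if_true, ite_mul, one_mul,
    zero_mul]
  rw [Finset.sum_comm]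
  simp

theorem top_fin_two_adjMatrix_mulVec_apply [NonAssocSemiring R] (x : Fin 2 → R) (i : Fin 2) :
    ((⊤ : SimpleGraph (Fin 2)).adjMatrix R *ᵥ x) i = x (i + 1) := by
  fin_cases i <;> simp [mulVec, dotProduct, Fin.sum_univ_two]

theorem boxProd_top_fin_two_adjMatrix_mulVec_apply [CommRing R] [Fintype V] (H : SimpleGraph V)
    [DecidableRel H.Adj] (z : Fin 2 × V → R) (i : Fin 2) (u : V) :
    (((⊤ : SimpleGraph (Fin 2)) □ H).adjMatrix R *ᵥ z) (i, u) =
      (H.adjMatrix R *ᵥ fun w => z (i, w)) u + z (i + 1, u) := by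
  rw [boxProd_adjMatrix_mulVec_apply, top_fin_two_adjMatrix_mulVec_apply, add_comm]

def pairNeg [Ring R] : (V → R) →ₗ[R] (Fin 2 × V → R) where
  toFun a p := if p.1 = 0 then a p.2 else -a p.2
  map_add' a b := by ext p; by_cases hp : p.1 = 0 <;> simp [hp, add_comm]
  map_smul' c a := by ext p; by_cases hp : p.1 = 0 <;> simp [hp]

theorem pairNeg_injective [Ring R] : Function.Injective (pairNeg (R := R) (V := V)) := by
  intro a b hab
  funext u
  simpa [pairNeg] using congrFun hab (0, u)

theorem pairNeg_apply_ne_zero [Ring R] [NoZeroDivisors R] {a : V → R} (ha : ∀ u, a u ≠ 0)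
    (p : Fin 2 × V) : pairNeg a p ≠ 0 := by
  by_cases hp : p.1 = 0 <;> simp [pairNeg, hp, ha]

theorem boxProd_top_fin_two_adjMatrix_mulVec_pairNeg [CommRing R] [Fintype V]
    (H : SimpleGraph V) [DecidableRel H.Adj] (a : V → R) :
    ((⊤ : SimpleGraph (Fin 2)) □ H).adjMatrix R *ᵥ pairNeg a =
      pairNeg (H.adjMatrix R *ᵥ a - a) := by
  ext ⟨i, u⟩
  rw [boxProd_top_fin_two_adjMatrix_mulVec_apply]
  fin_cases i <;> simp [pairNeg, sub_eq_add_neg, add_comm]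

theorem ker_boxProd_top_fin_two [CommRing R] [Fintype V] [DecidableEq V] (H : SimpleGraph V)
    [DecidableRel H.Adj] (h : ∀ x : V → R, H.adjMatrix R *ᵥ x = -x → x = 0) :
    LinearMap.ker (((⊤ : SimpleGraph (Fin 2)) □ H).adjMatrix R).mulVecLin =
      (LinearMap.ker (H.adjMatrix R - 1).mulVecLin).map pairNeg := by
  ext z
  rw [LinearMap.mem_ker, mulVecLin_apply, Submodule.mem_map]
  simp only [mem_ker_mulVecLin_sub_one_iff]
  constructor
  · intro hz
    set a : V → R := fun u => z (0, u)
    set b : V → R := fun u => z (1, u)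
    have hab : H.adjMatrix R *ᵥ a + b = 0 := funext fun u =>
      (boxProd_top_fin_two_adjMatrix_mulVec_apply H z 0 u).symm.trans (congrFun hz (0, u))
    have hba : H.adjMatrix R *ᵥ b + a = 0 := funext fun u =>
      (boxProd_top_fin_two_adjMatrix_mulVec_apply H z 1 u).symm.trans (congrFun hz (1, u))
    have hb : b = -a := by
      refine (neg_eq_of_add_eq_zero_right (h _ ?_)).symm
      rw [mulVec_add]
      linear_combination hab + hba
    refine ⟨a, by linear_combination hab - hb, ?_⟩
    ext ⟨i, u⟩
    fin_cases i
    · rfl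
    · simpa [pairNeg] using (congrFun hb u).symm
  · rintro ⟨a, ha, rfl⟩
    rw [boxProd_top_fin_two_adjMatrix_mulVec_pairNeg, ha, sub_self, map_zero]

end SimpleGraph

/-- If `1` is a simple eigenvalue of `A_H` with a full eigenvector `v`, and `-1` is not an
eigenvalue of `A_H`, then `K₂ □ H` is a nut graph and `y = (v, -v)` spans the kernel of
its adjacency matrix. -/
theorem boxProd_K2_isNut {V : Type} [Fintype V] [DecidableEq V]
    (H : SimpleGraph V) [DecidableRel H.Adj]
    (h1 : Module.finrank ℝ ↥(LinearMap.ker (H.adjMatrix ℝ - 1).mulVecLin) = 1)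
    (v : V → ℝ) (hv0 : v ≠ 0) (hv : (H.adjMatrix ℝ).mulVec v = v) (hvfull : ∀ u, v u ≠ 0)
    (h2 : ∀ x : V → ℝ, (H.adjMatrix ℝ).mulVec x = -x → x = 0) :
    LinearMap.ker ((((⊤ : SimpleGraph (Fin 2)) □ H).adjMatrix ℝ)).mulVecLin =
      Submodule.span ℝ {fun p : Fin 2 × V => if p.1 = 0 then v p.2 else -v p.2} ∧
    Module.finrank ℝ
      ↥(LinearMap.ker (((⊤ : SimpleGraph (Fin 2)) □ H).adjMatrix ℝ).mulVecLin) = 1 ∧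
    (∀ z : Fin 2 × V → ℝ, (((⊤ : SimpleGraph (Fin 2)) □ H).adjMatrix ℝ).mulVec z = 0 →
      z ≠ 0 → ∀ p, z p ≠ 0) := by
  have hspan_v : LinearMap.ker (H.adjMatrix ℝ - 1).mulVecLin = Submodule.span ℝ {v} :=
    eq_span_singleton_of_mem_of_finrank_eq_one h1
      ((mem_ker_mulVecLin_sub_one_iff _ v).mpr hv) hv0
  have hker : LinearMap.ker (((⊤ : SimpleGraph (Fin 2)) □ H).adjMatrix ℝ).mulVecLin =
      Submodule.span ℝ {pairNeg v} := by
    rw [ker_boxProd_top_fin_two H h2, hspan_v, Submodule.map_span, Set.image_singleton]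
  refine ⟨hker, ?_, fun z hz hz0 ↦ ?_⟩
  · rw [hker, finrank_span_singleton ((map_ne_zero_iff _ pairNeg_injective).mpr hv0)]
  · exact apply_ne_zero_of_mem_span_singleton (pairNeg_apply_ne_zero hvfull)
      (hker ▸ LinearMap.mem_ker.mpr hz) hz0
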